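/- Let (Σ, L, ξ) be a state property system with Cartan map κ. Then (Σ, L, ξ) is a pure nonclassical state property system (i.e. the only classical properties in L are 0 and I) if and only if the associated closure space (Σ, κ(L)) is connected (i.e. the only subsets A ⊆ Σ with both A ∈ κ(L) and Σ \ A ∈ κ(L) are ∅ and Σ). -/

import Mathlib

/-- The Cartan map of a state property system: `κ a = {p | a ∈ ξ p}`. -/
def cartan {S L : Type*} (ξ : S → Set L) (a : L) : Set S := {p | a ∈ ξ p}

/-- `(S, L, ξ)` is a state property system. -/
structure IsSPS {S L : Type*} [CompleteLattice L] (ξ : S → Set L) : Prop where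
  bot_not_mem : ∀ p, (⊥ : L) ∉ ξ p
  sInf_mem : ∀ p (A : Set L), (∀ a ∈ A, a ∈ ξ p) → sInf A ∈ ξ p
  le_iff : ∀ a b : L, a ≤ b ↔ ∀ r, a ∈ ξ r → b ∈ ξ r
/-- `a` and `b` are separated by a superselection rule. -/
def Ssr {S L : Type*} [CompleteLattice L] (ξ : S → Set L) (a b : L) : Prop :=
  ∀ p, a ⊔ b ∈ ξ p → a ∈ ξ p ∨ b ∈ ξ p

/-- `a` is a classical property of the state property system. -/
def IsClassicalProp {S L : Type*} [CompleteLattice L] (ξ : S → Set L) (a : L) : Prop :=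
  ∃ ac : L, a ⊔ ac = ⊤ ∧ a ⊓ ac = ⊥ ∧ Ssr ξ a ac

/-! Since `a ≤ b ↔ κ a ⊆ κ b`, the Cartan map is an order embedding sending `⊤, ⊥, ⊓` to
`Σ, ∅, ∩`, and `a ssr b` says exactly `κ (a ⊔ b) ⊆ κ a ∪ κ b`. Hence `b` is a classical
complement of `a` iff `κ b = (κ a)ᶜ`, so the classical properties are exactly those whose
image under `κ` is clopen, and `a ∈ {⊥, ⊤}` iff `κ a ∈ {∅, Σ}`. -/

@[simp]
theorem mem_cartan {S L : Type*} {ξ : S → Set L} {a : L} {p : S} : p ∈ cartan ξ a ↔ a ∈ ξ p :=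
  Iff.rfl

theorem ssr_iff_cartan_sup_subset {S L : Type*} [CompleteLattice L] {ξ : S → Set L} {a b : L} :
    Ssr ξ a b ↔ cartan ξ (a ⊔ b) ⊆ cartan ξ a ∪ cartan ξ b :=
  Iff.rfl

namespace IsSPS

variable {S L : Type*} [CompleteLattice L] {ξ : S → Set L} (hξ : IsSPS ξ)
include hξ

theorem cartan_subset_cartan_iff {a b : L} : cartan ξ a ⊆ cartan ξ b ↔ a ≤ b :=
  (hξ.le_iff a b).symm

theorem cartan_injective : Function.Injective (cartan ξ) := fun _ _ h =>
  le_antisymm (hξ.cartan_subset_cartan_iff.mp h.le) (hξ.cartan_subset_cartan_iff.mp h.ge)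

theorem cartan_top : cartan ξ (⊤ : L) = Set.univ :=
  Set.eq_univ_of_forall fun p => by simpa using hξ.sInf_mem p ∅ (by simp)

theorem cartan_bot : cartan ξ (⊥ : L) = ∅ :=
  Set.eq_empty_of_forall_notMem hξ.bot_not_mem

theorem cartan_inf (a b : L) : cartan ξ (a ⊓ b) = cartan ξ a ∩ cartan ξ b := by
  refine Set.Subset.antisymm
    (Set.subset_inter (hξ.cartan_subset_cartan_iff.mpr inf_le_left)
      (hξ.cartan_subset_cartan_iff.mpr inf_le_right)) ?_
  rintro p ⟨ha, hb⟩
  simpa using hξ.sInf_mem p {a, b} (by simp_all)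

theorem cartan_union_subset_cartan_sup (a b : L) :
    cartan ξ a ∪ cartan ξ b ⊆ cartan ξ (a ⊔ b) :=
  Set.union_subset (hξ.cartan_subset_cartan_iff.mpr le_sup_left)
    (hξ.cartan_subset_cartan_iff.mpr le_sup_right)

theorem cartan_eq_empty_iff {a : L} : cartan ξ a = ∅ ↔ a = ⊥ := by
  rw [← hξ.cartan_bot, hξ.cartan_injective.eq_iff]

theorem cartan_eq_univ_iff {a : L} : cartan ξ a = Set.univ ↔ a = ⊤ := by
  rw [← hξ.cartan_top, hξ.cartan_injective.eq_iff]

theorem cartan_eq_compl_iff {a b : L} :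
    cartan ξ b = (cartan ξ a)ᶜ ↔ a ⊔ b = ⊤ ∧ a ⊓ b = ⊥ ∧ Ssr ξ a b := by
  rw [← hξ.cartan_eq_univ_iff, ← hξ.cartan_eq_empty_iff, hξ.cartan_inf,
    ssr_iff_cartan_sup_subset]
  constructor
  · intro hb
    have hcover : cartan ξ a ∪ cartan ξ b = Set.univ := by
      rw [hb, Set.union_compl_self]
    refine ⟨?_, by rw [hb, Set.inter_compl_self], by rw [hcover]; exact Set.subset_univ _⟩
    exact Set.eq_univ_of_univ_subset (hcover ▸ hξ.cartan_union_subset_cartan_sup a b)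
  · rintro ⟨hsup, hinf, hssr⟩
    have hcover : cartan ξ a ∪ cartan ξ b = Set.univ :=
      Set.eq_univ_of_univ_subset (hsup ▸ hssr)
    exact (IsCompl.compl_eq ⟨Set.disjoint_iff_inter_eq_empty.mpr hinf,
      codisjoint_iff.mpr hcover⟩).symm

theorem isClassicalProp_iff {a : L} :
    IsClassicalProp ξ a ↔ (cartan ξ a)ᶜ ∈ Set.range (cartan ξ) := by
  simp only [IsClassicalProp, Set.mem_range, hξ.cartan_eq_compl_iff]

end IsSPS

/-- `(Σ, L, ξ)` is pure nonclassical (its only classical properties are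
`0` and `I`) iff the closure space `(Σ, κ(L))` is connected (its only clopen subsets
are `∅` and `Σ`). -/
theorem stmt8 {S L : Type*} [CompleteLattice L] (ξ : S → Set L) (hξ : IsSPS ξ) :
    (∀ a : L, IsClassicalProp ξ a → a = ⊥ ∨ a = ⊤) ↔
    (∀ A : Set S, A ∈ Set.range (cartan ξ) → Aᶜ ∈ Set.range (cartan ξ) →
      A = ∅ ∨ A = Set.univ) := by
  simp only [Set.forall_mem_range, hξ.isClassicalProp_iff, hξ.cartan_eq_empty_iff,
    hξ.cartan_eq_univ_iff]
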